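/- arXiv:1910.04975 — 8 statements merged into one kernel-verified Lean document; each statement's English description precedes it below -/
import Mathlib

section
/- Let g, h_L, h_R, v_L, v_R, R_L, R_R be real numbers. If R_R + ½g h_R² = R_L + ½g h_L² and R_R v_R − R_L v_L + g·((h_L v_L + h_R v_R)/2)·(h_R − h_L) = 0, then ((R_L + R_R)/2 + (g/4)(h_R − h_L)²)·(v_R − v_L) = 0. -/
/-- combining two contact-wave jump conditions of the shear
shallow water system yields
`(⟨R⟩ + (g/4)⟦h⟧²)·⟦v⟧ = 0`. -/
theorem contact_jump_combination
    (g hL hR vL vR RL RR : ℝ)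
    (h1 : RR + g * hR ^ 2 / 2 = RL + g * hL ^ 2 / 2)
    (h2 : RR * vR - RL * vL + g * ((hL * vL + hR * vR) / 2) * (hR - hL) = 0) :
    ((RL + RR) / 2 + (g / 4) * (hR - hL) ^ 2) * (vR - vL) = 0 := by
  linear_combination (-(vL + vR) / 2) * h1 + h2
end

section
/- Let g ≥ 0 and let h_L, h_R, v_L, v_R, R_L, R_R be real numbers with R_L > 0 and R_R > 0. If R_R + ½g h_R² = R_L + ½g h_L² and R_R v_R − R_L v_L + g·((h_L v_L + h_R v_R)/2)·(h_R − h_L) = 0, then v_L = v_R. -/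
/-- across the contact wave of the shear shallow water system,
if the normal stress `R₁₁` is positive on both sides, the transverse
velocity is continuous. -/
theorem contact_transverse_velocity_continuous
    (g hL hR vL vR RL RR : ℝ) (hg : 0 ≤ g)
    (hRL : 0 < RL) (hRR : 0 < RR)
    (h1 : RR + g * hR ^ 2 / 2 = RL + g * hL ^ 2 / 2)
    (h2 : RR * vR - RL * vL + g * ((hL * vL + hR * vR) / 2) * (hR - hL) = 0) :
    vL = vR := by
  have hS : 0 < RL + RR + g * (hL - hR) ^ 2 / 2 := by positivity
  have key : (vL - vR) * (RL + RR + g * (hL - hR) ^ 2 / 2) = 0 := by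
    linear_combination (-2 : ℝ) * h2 + (vL + vR) * h1
  have := mul_eq_zero.mp key
  rcases this with h | h
  · linarith
  · exact absurd h (ne_of_gt hS)
end

section
/- Let m, h, h_*, p_*, g, u, u_*, P₁₂ be real numbers with D := m² − h_* p_* + ½g h h_*² ≠ 0. Define v_* − v := [m(h − h_*) − h h_* (u − u_*)]·P₁₂ / D and P₁₂^* := [m² − h p_* + ½g h² h_* + m h (u − u_*)]·P₁₂ / D. Then these values satisfy the linear system m(v_* − v) + h_* P₁₂^* = h P₁₂ and (p_* − ½g h h_*)(v_* − v) + m P₁₂^* = (m + h(u − u_*)) P₁₂, and they are the unique solution of this system. -/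
/-- the 2×2 linear system for the intermediate transverse
velocity and shear stress in the 5-wave HLLC solver has the displayed
explicit values as its unique solution. -/
theorem shear_stress_linear_system
    (m h hstar pstar g u ustar P12 : ℝ)
    (hD : m ^ 2 - hstar * pstar + g * h * hstar ^ 2 / 2 ≠ 0)
    (dv Pstar : ℝ)
    (hdv : dv = (m * (h - hstar) - h * hstar * (u - ustar)) * P12
        / (m ^ 2 - hstar * pstar + g * h * hstar ^ 2 / 2))
    (hPstar : Pstar = (m ^ 2 - h * pstar + g * h ^ 2 * hstar / 2
          + m * h * (u - ustar)) * P12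
        / (m ^ 2 - hstar * pstar + g * h * hstar ^ 2 / 2)) :
    (m * dv + hstar * Pstar = h * P12)
    ∧ ((pstar - g * h * hstar / 2) * dv + m * Pstar = (m + h * (u - ustar)) * P12)
    ∧ (∀ dv' Pstar' : ℝ,
        (m * dv' + hstar * Pstar' = h * P12)
        → ((pstar - g * h * hstar / 2) * dv' + m * Pstar'
            = (m + h * (u - ustar)) * P12)
        → dv' = dv ∧ Pstar' = Pstar) := by
  have hdv' : dv * (m ^ 2 - hstar * pstar + g * h * hstar ^ 2 / 2)
      = (m * (h - hstar) - h * hstar * (u - ustar)) * P12 := by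
    rw [hdv, div_mul_cancel₀ _ hD]
  have hP' : Pstar * (m ^ 2 - hstar * pstar + g * h * hstar ^ 2 / 2)
      = (m ^ 2 - h * pstar + g * h ^ 2 * hstar / 2 + m * h * (u - ustar)) * P12 := by
    rw [hPstar, div_mul_cancel₀ _ hD]
  refine ⟨?_, ?_, ?_⟩
  · refine mul_right_cancel₀ hD ?_
    linear_combination m * hdv' + hstar * hP'
  · refine mul_right_cancel₀ hD ?_
    linear_combination (pstar - g * h * hstar / 2) * hdv' + m * hP'
  · intro dv' Pstar' h1 h2
    constructor
    · rw [hdv, eq_div_iff hD]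
      linear_combination m * h1 - hstar * h2
    · rw [hPstar, eq_div_iff hD]
      linear_combination m * h2 - (pstar - g * h * hstar / 2) * h1
end

section
/- Let c > 0 and a₁, a₂ ∈ ℝ. Set q := √(a₁² + a₂²), m := (−1 + √(1 + 4cq)) / (2c), m₁ := a₁ / (1 + cm), and m₂ := a₂ / (1 + cm). Then m ≥ 0, m is the unique nonnegative solution of c m² + m − q = 0, √(m₁² + m₂²) = m, and m₁ + c m₁ √(m₁² + m₂²) = a₁ and m₂ + c m₂ √(m₁² + m₂²) = a₂. -/
/-- exact solution of the semi-implicit friction update for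
the momentum components: the displayed `m, m₁, m₂` solve the coupled
nonlinear system `mᵢ + c mᵢ √(m₁²+m₂²) = aᵢ`, and `m` is the unique
nonnegative root of `c m² + m − q = 0`. -/
theorem semi_implicit_momentum_update
    (c a1 a2 : ℝ) (hc : 0 < c)
    (q m m1 m2 : ℝ)
    (hq : q = Real.sqrt (a1 ^ 2 + a2 ^ 2))
    (hm : m = (-1 + Real.sqrt (1 + 4 * c * q)) / (2 * c))
    (hm1 : m1 = a1 / (1 + c * m))
    (hm2 : m2 = a2 / (1 + c * m)) :
    0 ≤ m
    ∧ (c * m ^ 2 + m - q = 0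
        ∧ ∀ m' : ℝ, 0 ≤ m' → c * m' ^ 2 + m' - q = 0 → m' = m)
    ∧ Real.sqrt (m1 ^ 2 + m2 ^ 2) = m
    ∧ m1 + c * m1 * Real.sqrt (m1 ^ 2 + m2 ^ 2) = a1
    ∧ m2 + c * m2 * Real.sqrt (m1 ^ 2 + m2 ^ 2) = a2 := by
  have hq0 : 0 ≤ q := hq ▸ Real.sqrt_nonneg _
  set s := Real.sqrt (1 + 4 * c * q) with hs
  have harg : (0:ℝ) ≤ 1 + 4 * c * q := by positivity
  have hs2 : s ^ 2 = 1 + 4 * c * q := Real.sq_sqrt harg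
  have hs1 : 1 ≤ s := by
    nlinarith [Real.sqrt_nonneg (1 + 4 * c * q), hs2]
  have hm0 : 0 ≤ m := by
    rw [hm]
    apply div_nonneg (by linarith) (by linarith)
  have hroot : c * m ^ 2 + m - q = 0 := by
    have : m * (2 * c) = -1 + s := by
      rw [hm]; field_simp
    nlinarith [hs2, this]
  have hden : 0 < 1 + c * m := by nlinarith
  have hq' : q = m * (1 + c * m) := by nlinarith
  have hnorm : Real.sqrt (m1 ^ 2 + m2 ^ 2) = m := by
    rw [hm1, hm2, div_pow, div_pow, ← add_div, Real.sqrt_div' _ (by positivity),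
      Real.sqrt_sq hden.le, ← hq, hq']
    field_simp
  refine ⟨hm0, ⟨hroot, ?_⟩, hnorm, ?_, ?_⟩
  · intro m' hm'0 hm'
    have key : (m' - m) * (c * (m' + m) + 1) = 0 := by nlinarith
    have hpos : 0 < c * (m' + m) + 1 := by nlinarith
    have := mul_eq_zero.1 key
    rcases this with h | h
    · linarith
    · linarith
  · rw [hnorm, hm1]; field_simp
  · rw [hnorm, hm2]; field_simp
end

section
/- Let h > 0, K ≥ 0, φ > 0, and Q > 0 be real numbers, and define f : (0,∞) → ℝ by f(T) = ½ h T + K·max(0, (T − φh²)/T²)·T − Q. Then f is continuous and strictly increasing on (0,∞), f(T) < 0 for all sufficiently small T > 0, f(T) → ∞ as T → ∞, and consequently there exists a unique T > 0 with f(T) = 0. -/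
open Filter Topology

/-- the nonlinear scalar equation `f(T) = 0` for the trace of
the intermediate stress tensor in the semi-implicit scheme has a unique
positive solution: `f` is continuous and strictly increasing on `(0,∞)`,
negative near `0⁺`, and tends to `∞` at `∞`. -/
theorem semi_implicit_trace_equation
    (h K φ Q : ℝ) (hh : 0 < h) (hK : 0 ≤ K) (hφ : 0 < φ) (hQ : 0 < Q)
    (f : ℝ → ℝ)
    (hf : ∀ T : ℝ, f T = h * T / 2
        + K * max 0 ((T - φ * h ^ 2) / T ^ 2) * T - Q) :
    ContinuousOn f (Set.Ioi 0)
    ∧ StrictMonoOn f (Set.Ioi 0)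
    ∧ (∀ᶠ T in 𝓝[>] (0:ℝ), f T < 0)
    ∧ Tendsto f atTop atTop
    ∧ (∃! T : ℝ, 0 < T ∧ f T = 0) := by
  set c : ℝ := φ * h ^ 2 with hc
  have hcpos : 0 < c := by positivity
  -- simplified form on (0,∞)
  have key : ∀ T : ℝ, 0 < T → f T = h * T / 2 + K * max 0 (1 - c / T) - Q := by
    intro T hT
    rw [hf T]
    have hT2 : (T : ℝ) ^ 2 ≠ 0 := by positivity
    have : max 0 ((T - c) / T ^ 2) * T = max 0 (1 - c / T) := by
      rw [max_mul_of_nonneg _ _ hT.le, zero_mul]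
      congr 1
      field_simp
    rw [mul_assoc, this]
  have hcont : ContinuousOn f (Set.Ioi 0) := by
    have hg : ContinuousOn (fun T => h * T / 2 + K * max 0 ((T - c) / T ^ 2) * T - Q) (Set.Ioi 0) := by
      have hdiv : ContinuousOn (fun T : ℝ => (T - c) / T ^ 2) (Set.Ioi 0) := by
        apply ContinuousOn.div (by fun_prop) (by fun_prop)
        intro x hx
        have : (0:ℝ) < x := hx
        positivity
      have hmax : ContinuousOn (fun T : ℝ => max 0 ((T - c) / T ^ 2)) (Set.Ioi 0) :=
        ContinuousOn.sup continuousOn_const hdiv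
      exact (((continuousOn_const.mul continuousOn_id).div_const 2).add
        ((continuousOn_const.mul hmax).mul continuousOn_id)).sub continuousOn_const
    exact hg.congr fun x _ => hf x
  have hmono : StrictMonoOn f (Set.Ioi 0) := by
    intro a ha b hb hab
    have ha' : (0:ℝ) < a := ha
    have hb' : (0:ℝ) < b := hb
    rw [key a ha', key b hb']
    have h1 : h * a / 2 < h * b / 2 := by
      have := mul_lt_mul_of_pos_left hab hh
      linarith
    have h2 : K * max 0 (1 - c / a) ≤ K * max 0 (1 - c / b) := by
      apply mul_le_mul_of_nonneg_left _ hK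
      apply max_le_max le_rfl
      have : c / b ≤ c / a := by
        apply div_le_div_of_nonneg_left hcpos.le ha' hab.le
      linarith
    linarith
  have hneg : ∀ᶠ T in 𝓝[>] (0:ℝ), f T < 0 := by
    have hε : (0:ℝ) < min c (2 * Q / h) := by positivity
    filter_upwards [Ioo_mem_nhdsGT_of_mem (by constructor <;> simp [hε] : (0:ℝ) ∈ Set.Ico 0 (min c (2 * Q / h)))] with T hT
    obtain ⟨hT0, hTlt⟩ := hT
    have hTc : T < c := lt_of_lt_of_le hTlt (min_le_left _ _)
    have hTQ : T < 2 * Q / h := lt_of_lt_of_le hTlt (min_le_right _ _)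
    rw [key T hT0]
    have : 1 - c / T ≤ 0 := by
      have : 1 < c / T := (one_lt_div hT0).2 hTc
      linarith
    rw [max_eq_left this]
    have : h * T < 2 * Q := by
      calc h * T < h * (2 * Q / h) := by exact mul_lt_mul_of_pos_left hTQ hh
        _ = 2 * Q := by field_simp
    linarith
  have htop : Tendsto f atTop atTop := by
    have hlin : Tendsto (fun T : ℝ => h * T / 2 - Q) atTop atTop := by
      apply tendsto_atTop_add_const_right
      have heq : (fun T : ℝ => h * T / 2) = fun T : ℝ => h / 2 * T := by funext T; ring
      rw [heq]
      exact Tendsto.const_mul_atTop (by positivity) tendsto_id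
    apply tendsto_atTop_mono' _ _ hlin
    filter_upwards [eventually_gt_atTop (0:ℝ)] with T hT
    rw [key T hT]
    have : 0 ≤ K * max 0 (1 - c / T) := by positivity
    linarith
  refine ⟨hcont, hmono, hneg, htop, ?_⟩
  -- existence
  obtain ⟨a, hfa, ha⟩ := (hneg.and self_mem_nhdsWithin).exists
  obtain ⟨b, hfb, hab⟩ := ((htop.eventually_gt_atTop 0).and (eventually_ge_atTop a)).exists
  have ha0 : (0:ℝ) < a := ha
  have hsub : Set.Icc a b ⊆ Set.Ioi 0 := fun x hx => lt_of_lt_of_le ha0 hx.1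
  obtain ⟨T, hTmem, hfT⟩ := intermediate_value_Icc hab (hcont.mono hsub)
    (show (0:ℝ) ∈ Set.Icc (f a) (f b) from ⟨hfa.le, hfb.le⟩)
  have hT0 : 0 < T := lt_of_lt_of_le ha0 hTmem.1
  refine ⟨T, ⟨hT0, hfT⟩, ?_⟩
  intro y ⟨hy0, hfy⟩
  exact hmono.injOn hy0 hT0 (by rw [hfy, hfT])
end

section
/- Let h, u, v, P₁₁, P₁₂, P₂₂ : ℝ² → ℝ be continuously differentiable functions of (t,x) with h > 0 and P₁₁P₂₂ − P₁₂² > 0 everywhere, satisfying the one-dimensional shear shallow water system without source terms: ∂ₜh + ∂ₓ(hu) = 0; ∂ₜ(hu) + ∂ₓ(hu² + ½gh² + hP₁₁) = 0; ∂ₜ(hv) + ∂ₓ(huv + hP₁₂) = 0; ∂ₜP₁₁ + u∂ₓP₁₁ + 2P₁₁∂ₓu = 0; ∂ₜP₁₂ + u∂ₓP₁₂ + P₁₂∂ₓu + P₁₁∂ₓv = 0; ∂ₜP₂₂ + u∂ₓP₂₂ + 2P₁₂∂ₓv = 0, where g > 0 is constant. Then the entropy η := −h·log((P₁₁P₂₂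 − P₁₂²)/h²) satisfies ∂ₜη + ∂ₓ(η u) = 0. -/
/-- Partial derivative with respect to time `t` (first coordinate). -/
noncomputable def dt (f : ℝ × ℝ → ℝ) (p : ℝ × ℝ) : ℝ := fderiv ℝ f p (1, 0)
/-- Partial derivative with respect to space `x` (second coordinate). -/
noncomputable def dx (f : ℝ × ℝ → ℝ) (p : ℝ × ℝ) : ℝ := fderiv ℝ f p (0, 1)

lemma fd_mul (f g : ℝ × ℝ → ℝ) (p w : ℝ × ℝ)
    (hf : DifferentiableAt ℝ f p) (hg : DifferentiableAt ℝ g p) :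
    fderiv ℝ (fun q => f q * g q) p w
      = fderiv ℝ f p w * g p + f p * fderiv ℝ g p w := by
  rw [fderiv_fun_mul hf hg]
  simp [smul_eq_mul]
  ring

lemma fd_log (f : ℝ × ℝ → ℝ) (p w : ℝ × ℝ)
    (hf : DifferentiableAt ℝ f p) (h0 : f p ≠ 0) :
    fderiv ℝ (fun q => Real.log (f q)) p w = fderiv ℝ f p w / f p := by
  rw [(hf.hasFDerivAt.log h0).fderiv]
  simp [div_eq_inv_mul, smul_eq_mul]

lemma fd_sub (f g : ℝ × ℝ → ℝ) (p w : ℝ × ℝ)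
    (hf : DifferentiableAt ℝ f p) (hg : DifferentiableAt ℝ g p) :
    fderiv ℝ (fun q => f q - g q) p w = fderiv ℝ f p w - fderiv ℝ g p w := by
  rw [fderiv_fun_sub hf hg]; simp

lemma fd_neg (f : ℝ × ℝ → ℝ) (p w : ℝ × ℝ) :
    fderiv ℝ (fun q => -(f q)) p w = -(fderiv ℝ f p w) := by
  rw [fderiv_fun_neg]; simp

lemma fd_cmul (c : ℝ) (f : ℝ × ℝ → ℝ) (p w : ℝ × ℝ)
    (hf : DifferentiableAt ℝ f p) :
    fderiv ℝ (fun q => c * f q) p w = c * fderiv ℝ f p w := by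
  rw [fderiv_const_mul hf]; simp

/-- smooth solutions of the one-dimensional shear shallow
water system satisfy the entropy conservation law
`∂ₜη + ∂ₓ(ηu) = 0` for `η = −h log((P₁₁P₂₂ − P₁₂²)/h²)`. -/
theorem ssw_entropy_conservation
    (g : ℝ) (hg : 0 < g)
    (h u v P11 P12 P22 : ℝ × ℝ → ℝ)
    (hh : ContDiff ℝ 1 h) (hu : ContDiff ℝ 1 u) (hv : ContDiff ℝ 1 v)
    (hP11 : ContDiff ℝ 1 P11) (hP12 : ContDiff ℝ 1 P12)
    (hP22 : ContDiff ℝ 1 P22)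
    (hpos : ∀ p, 0 < h p)
    (hdet : ∀ p, 0 < P11 p * P22 p - (P12 p) ^ 2)
    (e1 : ∀ p, dt h p + dx (fun q => h q * u q) p = 0)
    (e2 : ∀ p, dt (fun q => h q * u q) p
        + dx (fun q => h q * (u q) ^ 2 + g * (h q) ^ 2 / 2 + h q * P11 q) p = 0)
    (e3 : ∀ p, dt (fun q => h q * v q) p
        + dx (fun q => h q * u q * v q + h q * P12 q) p = 0)
    (e4 : ∀ p, dt P11 p + u p * dx P11 p + 2 * P11 p * dx u p = 0)
    (e5 : ∀ p, dt P12 p + u p * dx P12 p + P12 p * dx u p + P11 p * dx v p = 0)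
    (e6 : ∀ p, dt P22 p + u p * dx P22 p + 2 * P12 p * dx v p = 0) :
    ∀ p, dt (fun q =>
          -h q * Real.log ((P11 q * P22 q - (P12 q) ^ 2) / (h q) ^ 2)) p
        + dx (fun q =>
          (-h q * Real.log ((P11 q * P22 q - (P12 q) ^ 2) / (h q) ^ 2)) * u q) p
        = 0 := by
  intro p
  -- differentiability facts
  have Hh : ∀ q, DifferentiableAt ℝ h q := fun q => (hh.differentiable one_ne_zero).differentiableAt
  have Hu : ∀ q, DifferentiableAt ℝ u q := fun q => (hu.differentiable one_ne_zero).differentiableAt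
  have H11 : ∀ q, DifferentiableAt ℝ P11 q := fun q => (hP11.differentiable one_ne_zero).differentiableAt
  have H12 : ∀ q, DifferentiableAt ℝ P12 q := fun q => (hP12.differentiable one_ne_zero).differentiableAt
  have H22 : ∀ q, DifferentiableAt ℝ P22 q := fun q => (hP22.differentiable one_ne_zero).differentiableAt
  set Df : ℝ × ℝ → ℝ := fun q => P11 q * P22 q - P12 q * P12 q with hDf
  have HD : ∀ q, DifferentiableAt ℝ Df q := fun q =>
    ((H11 q).mul (H22 q)).sub ((H12 q).mul (H12 q))
  have hD0 : ∀ q, Df q ≠ 0 := fun q => by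
    have := hdet q; simp only [hDf]; nlinarith
  have hh0 : ∀ q, h q ≠ 0 := fun q => (hpos q).ne'
  -- the log-function and its derivative
  set L : ℝ × ℝ → ℝ := fun q => Real.log (Df q) - 2 * Real.log (h q) with hL
  have HL : ∀ q, DifferentiableAt ℝ L q := fun q =>
    ((HD q).log (hD0 q)).sub (((Hh q).log (hh0 q)).const_mul 2)
  have HF : ∀ q, DifferentiableAt ℝ (fun r => h r * L r) q := fun q =>
    (Hh q).mul (HL q)
  -- rewrite entropy pointwise
  have hptw : ∀ q, (-h q * Real.log ((P11 q * P22 q - (P12 q) ^ 2) / (h q) ^ 2))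
      = -(h q * L q) := by
    intro q
    rw [show P11 q * P22 q - (P12 q) ^ 2 = P11 q * P22 q - P12 q * P12 q from by ring]
    have hd : P11 q * P22 q - P12 q * P12 q ≠ 0 := by have := hdet q; nlinarith
    rw [Real.log_div hd (pow_ne_zero 2 (hh0 q)), Real.log_pow]
    simp only [hL, hDf]
    push_cast
    ring
  simp only [hptw]
  -- derivative of L in direction w
  have fdL : ∀ w, fderiv ℝ L p w
      = fderiv ℝ Df p w / Df p - 2 * (fderiv ℝ h p w / h p) := by
    intro w
    simp only [hL]
    rw [fd_sub _ _ _ _ ((HD p).log (hD0 p)) (((Hh p).log (hh0 p)).const_mul 2),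
      fd_cmul _ _ _ _ ((Hh p).log (hh0 p)), fd_log _ _ _ (HD p) (hD0 p),
      fd_log _ _ _ (Hh p) (hh0 p)]
  -- derivative of Df in direction w
  have fdD : ∀ w, fderiv ℝ Df p w
      = fderiv ℝ P11 p w * P22 p + P11 p * fderiv ℝ P22 p w
        - 2 * (P12 p * fderiv ℝ P12 p w) := by
    intro w
    simp only [hDf]
    rw [fd_sub (fun q => P11 q * P22 q) (fun q => P12 q * P12 q) _ _ ((H11 p).mul (H22 p)) ((H12 p).mul (H12 p)),
      fd_mul _ _ _ _ (H11 p) (H22 p), fd_mul _ _ _ _ (H12 p) (H12 p)]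
    ring
  -- expand the goal
  unfold dt dx
  rw [show (fun q => -(h q * L q) * u q) = (fun q => -((fun r => h r * L r) q * u q)) from by
      funext q; ring]
  rw [fd_neg, fd_neg, fd_mul _ _ _ _ (HF p) (Hu p),
    fd_mul h L p (1,0) (Hh p) (HL p), fd_mul h L p (0,1) (Hh p) (HL p),
    fdL, fdL, fdD, fdD]
  -- abbreviations for point values
  -- hypotheses at p
  have E1 := e1 p
  unfold dt dx at E1
  rw [fd_mul _ _ _ _ (Hh p) (Hu p)] at E1
  have E4 := e4 p; have E5 := e5 p; have E6 := e6 p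
  unfold dt dx at E4 E5 E6
  have hDp := hD0 p
  have hhp := hh0 p
  field_simp
  linear_combination
    ((2 - L p) * Df p) * E1
    + (-(h p)) * (P22 p * E4 + P11 p * E6 - 2 * P12 p * E5)
end

section
/- Let h, u, v, P₁₁, P₁₂, P₂₂ : ℝ² → ℝ be continuously differentiable functions of (t,x) with h > 0 everywhere, satisfying the one-dimensional shear shallow water system without source terms: ∂ₜh + ∂ₓ(hu) = 0; ∂ₜ(hu) + ∂ₓ(hu² + ½gh² + hP₁₁) = 0; ∂ₜ(hv) + ∂ₓ(huv + hP₁₂) = 0; ∂ₜP₁₁ + u∂ₓP₁₁ + 2P₁₁∂ₓu = 0; ∂ₜP₁₂ + u∂ₓP₁₂ + P₁₂∂ₓu + P₁₁∂ₓv = 0; ∂ₜP₂₂ + u∂ₓP₂₂ + 2P₁₂∂ₓv = 0, where g > 0 is constant. Then the total energy E := ½h(u² + v²) + ½h(P₁₁ + P₂₂) + ½gh² satisfies the conservation law ∂ₜE + ∂ₓ[E u + (½gh² + hP₁₁)u + hP₁₂ v] = 0. -/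
private lemma D_add {f₁ f₂ : ℝ × ℝ → ℝ} {p w : ℝ × ℝ}
    (h1 : DifferentiableAt ℝ f₁ p) (h2 : DifferentiableAt ℝ f₂ p) :
    fderiv ℝ (fun q => f₁ q + f₂ q) p w = fderiv ℝ f₁ p w + fderiv ℝ f₂ p w := by
  rw [fderiv_fun_add h1 h2]; simp

private lemma D_mul {f₁ f₂ : ℝ × ℝ → ℝ} {p w : ℝ × ℝ}
    (h1 : DifferentiableAt ℝ f₁ p) (h2 : DifferentiableAt ℝ f₂ p) :
    fderiv ℝ (fun q => f₁ q * f₂ q) p w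
      = f₁ p * fderiv ℝ f₂ p w + f₂ p * fderiv ℝ f₁ p w := by
  rw [fderiv_fun_mul h1 h2]; simp

private lemma D_sq {f : ℝ × ℝ → ℝ} {p w : ℝ × ℝ}
    (h1 : DifferentiableAt ℝ f p) :
    fderiv ℝ (fun q => f q ^ 2) p w = 2 * f p * fderiv ℝ f p w := by
  have h : (fun q => f q ^ 2) = fun q => f q * f q := by funext q; ring
  rw [h, D_mul h1 h1]; ring

private lemma D_const_mul {f : ℝ × ℝ → ℝ} {p w : ℝ × ℝ} (c : ℝ)
    (h1 : DifferentiableAt ℝ f p) :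
    fderiv ℝ (fun q => c * f q) p w = c * fderiv ℝ f p w := by
  rw [fderiv_const_mul h1]; simp

private lemma D_div_const {f : ℝ × ℝ → ℝ} {p w : ℝ × ℝ} (c : ℝ)
    (h1 : DifferentiableAt ℝ f p) :
    fderiv ℝ (fun q => f q / c) p w = fderiv ℝ f p w / c := by
  have h : (fun q => f q / c) = fun q => c⁻¹ * f q := by funext q; ring
  rw [h, D_const_mul c⁻¹ h1]
  field_simp

/-- smooth solutions of the one-dimensional shear shallow
water system conserve the total energy
`E = ½h(u²+v²) + ½h(P₁₁+P₂₂) + ½gh²`: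
`∂ₜE + ∂ₓ[Eu + (½gh² + hP₁₁)u + hP₁₂v] = 0`. -/
theorem ssw_energy_conservation
    (g : ℝ) (hg : 0 < g)
    (h u v P11 P12 P22 : ℝ × ℝ → ℝ)
    (hh : ContDiff ℝ 1 h) (hu : ContDiff ℝ 1 u) (hv : ContDiff ℝ 1 v)
    (hP11 : ContDiff ℝ 1 P11) (hP12 : ContDiff ℝ 1 P12)
    (hP22 : ContDiff ℝ 1 P22)
    (hpos : ∀ p, 0 < h p)
    (e1 : ∀ p, dt h p + dx (fun q => h q * u q) p = 0)
    (e2 : ∀ p, dt (fun q => h q * u q) p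
        + dx (fun q => h q * (u q) ^ 2 + g * (h q) ^ 2 / 2 + h q * P11 q) p = 0)
    (e3 : ∀ p, dt (fun q => h q * v q) p
        + dx (fun q => h q * u q * v q + h q * P12 q) p = 0)
    (e4 : ∀ p, dt P11 p + u p * dx P11 p + 2 * P11 p * dx u p = 0)
    (e5 : ∀ p, dt P12 p + u p * dx P12 p + P12 p * dx u p + P11 p * dx v p = 0)
    (e6 : ∀ p, dt P22 p + u p * dx P22 p + 2 * P12 p * dx v p = 0) :
    ∀ p, dt (fun q =>
          h q * ((u q) ^ 2 + (v q) ^ 2) / 2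
            + h q * (P11 q + P22 q) / 2 + g * (h q) ^ 2 / 2) p
        + dx (fun q =>
          (h q * ((u q) ^ 2 + (v q) ^ 2) / 2
              + h q * (P11 q + P22 q) / 2 + g * (h q) ^ 2 / 2) * u q
            + (g * (h q) ^ 2 / 2 + h q * P11 q) * u q
            + h q * P12 q * v q) p
        = 0 := by
  intro p
  have Dh : DifferentiableAt ℝ h p := (hh.differentiable one_ne_zero) p
  have Du : DifferentiableAt ℝ u p := (hu.differentiable one_ne_zero) p
  have Dv : DifferentiableAt ℝ v p := (hv.differentiable one_ne_zero) p
  have DA : DifferentiableAt ℝ P11 p := (hP11.differentiable one_ne_zero) p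
  have DB : DifferentiableAt ℝ P12 p := (hP12.differentiable one_ne_zero) p
  have DC : DifferentiableAt ℝ P22 p := (hP22.differentiable one_ne_zero) p
  have E1 := e1 p
  have E2 := e2 p
  have E3 := e3 p
  have E4 := e4 p
  have E5 := e5 p
  have E6 := e6 p
  simp only [dt, dx] at E1 E2 E3 E4 E5 E6 ⊢
  simp (disch := fun_prop) only [D_add, D_mul, D_sq, D_const_mul, D_div_const, fderiv_fun_const, Pi.zero_apply, ContinuousLinearMap.zero_apply] at E1 E2 E3 ⊢
  linear_combination ((P11 p + P22 p) / 2 + g * h p - ((u p) ^ 2 + (v p) ^ 2) / 2) * E1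
    + u p * E2 + v p * E3 + (h p / 2) * E4 + (h p / 2) * E6
end

section
/- Let h, u, v, P₁₁, P₁₂, P₂₂ : ℝ² → ℝ be continuously differentiable functions of (t,x) with h > 0 everywhere, satisfying the one-dimensional shear shallow water system without source terms: ∂ₜh + ∂ₓ(hu) = 0; ∂ₜ(hu) + ∂ₓ(hu² + ½gh² + hP₁₁) = 0; ∂ₜ(hv) + ∂ₓ(huv + hP₁₂) = 0; ∂ₜP₁₁ + u∂ₓP₁₁ + 2P₁₁∂ₓu = 0; ∂ₜP₁₂ + u∂ₓP₁₂ + P₁₂∂ₓu + P₁₁∂ₓv = 0; ∂ₜP₂₂ + u∂ₓP₂₂ + 2P₁₂∂ₓv = 0, where g > 0 is constant. Define the energy tensor components E₁₁ := ½hP₁₁ + ½hu², E₁₂ := ½hP₁₂ + ½huv, E₂₂ := ½hP₂₂ + ½hv². Then: ∂ₜE₁₁ + ∂ₓ[(E₁₁ + hP₁₁)u] + g h u ∂ₓh = 0; ∂ₜE₁₂ + ∂ₓ[E₁₂ u + ½(hP₁₁ v + hP₁₂ u)] + ½ g h v ∂ₓh = 0; and ∂ₜE₂₂ + ∂ₓ[E₂₂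 u + hP₁₂ v] = 0. -/
/-- for smooth solutions of the one-dimensional shear shallow
water system, the energy-tensor components
`E₁₁ = ½hP₁₁ + ½hu²`, `E₁₂ = ½hP₁₂ + ½huv`, `E₂₂ = ½hP₂₂ + ½hv²`
satisfy the paper's reformulated evolution equations, whose non-conservative
products involve only derivatives of `h`. -/
theorem ssw_energy_tensor_equations
    (g : ℝ) (hg : 0 < g)
    (h u v P11 P12 P22 : ℝ × ℝ → ℝ)
    (hh : ContDiff ℝ 1 h) (hu : ContDiff ℝ 1 u) (hv : ContDiff ℝ 1 v)
    (hP11 : ContDiff ℝ 1 P11) (hP12 : ContDiff ℝ 1 P12)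
    (hP22 : ContDiff ℝ 1 P22)
    (hpos : ∀ p, 0 < h p)
    (e1 : ∀ p, dt h p + dx (fun q => h q * u q) p = 0)
    (e2 : ∀ p, dt (fun q => h q * u q) p
        + dx (fun q => h q * (u q) ^ 2 + g * (h q) ^ 2 / 2 + h q * P11 q) p = 0)
    (e3 : ∀ p, dt (fun q => h q * v q) p
        + dx (fun q => h q * u q * v q + h q * P12 q) p = 0)
    (e4 : ∀ p, dt P11 p + u p * dx P11 p + 2 * P11 p * dx u p = 0)
    (e5 : ∀ p, dt P12 p + u p * dx P12 p + P12 p * dx u p + P11 p * dx v p = 0)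
    (e6 : ∀ p, dt P22 p + u p * dx P22 p + 2 * P12 p * dx v p = 0) :
    (∀ p, dt (fun q => h q * P11 q / 2 + h q * (u q) ^ 2 / 2) p
        + dx (fun q =>
            (h q * P11 q / 2 + h q * (u q) ^ 2 / 2 + h q * P11 q) * u q) p
        + g * h p * u p * dx h p = 0)
    ∧ (∀ p, dt (fun q => h q * P12 q / 2 + h q * u q * v q / 2) p
        + dx (fun q =>
            (h q * P12 q / 2 + h q * u q * v q / 2) * u q
              + (h q * P11 q * v q + h q * P12 q * u q) / 2) p
        + g * h p * v p * dx h p / 2 = 0)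
    ∧ (∀ p, dt (fun q => h q * P22 q / 2 + h q * (v q) ^ 2 / 2) p
        + dx (fun q =>
            (h q * P22 q / 2 + h q * (v q) ^ 2 / 2) * u q
              + h q * P12 q * v q) p = 0) := by

  have Hh : Differentiable ℝ h := hh.differentiable one_ne_zero
  have Hu : Differentiable ℝ u := hu.differentiable one_ne_zero
  have Hv : Differentiable ℝ v := hv.differentiable one_ne_zero
  have H11 : Differentiable ℝ P11 := hP11.differentiable one_ne_zero
  have H12 : Differentiable ℝ P12 := hP12.differentiable one_ne_zero
  have H22 : Differentiable ℝ P22 := hP22.differentiable one_ne_zero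
  refine ⟨fun p => ?_, fun p => ?_, fun p => ?_⟩
  · have E1 := e1 p; have E2 := e2 p; have E4 := e4 p
    simp (disch := fun_prop) only [dt, dx, pow_two, div_eq_mul_inv, fderiv_fun_add, fderiv_fun_mul,
      fderiv_mul_const, fderiv_fun_const, Pi.zero_apply, ContinuousLinearMap.zero_apply, mul_zero,
      ContinuousLinearMap.add_apply, ContinuousLinearMap.smul_apply, smul_eq_mul] at E1 E2 E4 ⊢
    linear_combination ((P11 p - u p * u p) / 2) * E1 + u p * E2 + (h p / 2) * E4
  · have E1 := e1 p; have E2 := e2 p; have E3 := e3 p; have E5 := e5 p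
    simp (disch := fun_prop) only [dt, dx, pow_two, div_eq_mul_inv, fderiv_fun_add, fderiv_fun_mul,
      fderiv_mul_const, fderiv_fun_const, Pi.zero_apply, ContinuousLinearMap.zero_apply, mul_zero,
      ContinuousLinearMap.add_apply, ContinuousLinearMap.smul_apply, smul_eq_mul] at E1 E2 E3 E5 ⊢
    linear_combination ((P12 p - u p * v p) / 2) * E1 + (v p / 2) * E2 + (u p / 2) * E3
      + (h p / 2) * E5
  · have E1 := e1 p; have E3 := e3 p; have E6 := e6 p
    simp (disch := fun_prop) only [dt, dx, pow_two, div_eq_mul_inv, fderiv_fun_add, fderiv_fun_mul,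
      fderiv_mul_const, fderiv_fun_const, Pi.zero_apply, ContinuousLinearMap.zero_apply, mul_zero,
      ContinuousLinearMap.add_apply, ContinuousLinearMap.smul_apply, smul_eq_mul] at E1 E3 E6 ⊢
    linear_combination ((P22 p - v p * v p) / 2) * E1 + v p * E3 + (h p / 2) * E6
end
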